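/- arXiv:2509.14513 — 3 statements merged into one kernel-verified Lean document; each statement's English description precedes it below -/
import Mathlib

section
/- Let α ∈ [−1, 0] and γ ≤ 0. Then for every complex-valued f ∈ C_0^∞((0,1)) one has ∫_0^1 x^γ |f'(x)|² dx ≥ α² ∫_0^1 |f(x)|² dx − α ∫_0^1 ( (α + x^{γ/2}) / sin²(x) ) |f(x)|² dx + (αγ/2) ∫_0^1 x^{(γ/2)−1} cot(x) |f(x)|² dx. -/
open MeasureTheory Set

set_option maxHeartbeats 2000000 in
theorem stmt_17 (α γ : ℝ) (hα : α ∈ Icc (-1 : ℝ) 0) (hγ : γ ≤ 0) (f : ℝ → ℂ)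
    (hf : ContDiff ℝ (⊤ : ℕ∞) f) (hsupp : HasCompactSupport f)
    (hsub : tsupport f ⊆ Ioo (0 : ℝ) 1) :
    ∫ x in Ioo (0 : ℝ) 1, x ^ γ * ‖deriv f x‖ ^ 2
      ≥ α ^ 2 * (∫ x in Ioo (0 : ℝ) 1, ‖f x‖ ^ 2)
        - α * (∫ x in Ioo (0 : ℝ) 1, ((α + x ^ (γ / 2)) / (Real.sin x) ^ 2) * ‖f x‖ ^ 2)
        + (α * γ / 2) * ∫ x in Ioo (0 : ℝ) 1,
            x ^ (γ / 2 - 1) * (Real.cos x / Real.sin x) * ‖f x‖ ^ 2 := by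
  -- choose a compact interval [a,b] ⊂ (0,1) containing the support in its interior
  set K : Set ℝ := tsupport f ∪ Icc (1/3) (1/2) with hK
  have hKc : IsCompact K := hsupp.union isCompact_Icc
  have hKsub : K ⊆ Ioo 0 1 := by
    refine union_subset hsub ?_
    intro x hx
    exact ⟨by linarith [hx.1], by linarith [hx.2]⟩
  have hKne : K.Nonempty := ⟨1/3, Or.inr ⟨le_refl _, by norm_num⟩⟩
  set a : ℝ := sInf K / 2 with ha_def
  set b : ℝ := (sSup K + 1) / 2 with hb_def
  have ha0 : sInf K ∈ K := hKc.sInf_mem hKne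
  have hb0 : sSup K ∈ K := hKc.sSup_mem hKne
  have ha0p : 0 < sInf K := (hKsub ha0).1
  have hb0lt : sSup K < 1 := (hKsub hb0).2
  have hap : 0 < a := by positivity
  have hb1 : b < 1 := by rw [hb_def]; linarith
  have haa0 : a < sInf K := by rw [ha_def]; linarith
  have hb0b : sSup K < b := by rw [hb_def]; linarith [(hKsub hb0).1]
  have hKab : K ⊆ Ioo a b := by
    intro x hx
    exact ⟨lt_of_lt_of_le haa0 (csInf_le hKc.bddBelow hx),
      lt_of_le_of_lt (le_csSup hKc.bddAbove hx) hb0b⟩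
  have hab : a < b := by
    have := hKab (hKne.choose_spec)
    exact lt_trans this.1 this.2
  have hIccsub : Icc a b ⊆ Ioo 0 1 := fun x hx => ⟨lt_of_lt_of_le hap hx.1, lt_of_le_of_lt hx.2 hb1⟩
  have huIcc : Set.uIcc a b = Icc a b := uIcc_of_le hab.le
  have hIoosub : Ioo a b ⊆ Ioo (0:ℝ) 1 := fun x hx => hIccsub ⟨hx.1.le, hx.2.le⟩
  -- vanishing outside (a,b)
  have hvan : ∀ x, x ∉ Ioo a b → f x = 0 ∧ deriv f x = 0 := by
    intro x hx
    have hxts : x ∉ tsupport f := fun h => hx (hKab (Or.inl h))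
    exact ⟨image_eq_zero_of_notMem_tsupport hxts,
      Function.notMem_support.mp (fun h => hxts (support_deriv_subset h))⟩
  -- reduce set integrals to interval integrals
  have hred : ∀ g : ℝ → ℝ, (∀ x, x ∉ Ioo a b → g x = 0) →
      ∫ x in Ioo (0:ℝ) 1, g x = ∫ x in a..b, g x := by
    intro g hg
    calc ∫ x in Ioo (0:ℝ) 1, g x
        = ∫ x, g x := setIntegral_eq_integral_of_forall_compl_eq_zero
          (fun x hx => hg x (fun hx' => hx (hIoosub hx')))
      _ = ∫ x in Ioo a b, g x :=
          (setIntegral_eq_integral_of_forall_compl_eq_zero hg).symm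
      _ = ∫ x in a..b, g x := by
          rw [intervalIntegral.integral_of_le hab.le, integral_Ioc_eq_integral_Ioo]
  -- basic analytic facts
  have hfd : ∀ x, HasDerivAt f (deriv f x) x := fun x =>
    (hf.differentiable (by simp) x).hasDerivAt
  set F : ℝ → ℝ := fun x => ‖f x‖ ^ 2 with hF
  set F' : ℝ → ℝ := fun x => 2 * (inner ℝ (f x) (deriv f x) : ℝ) with hF'
  have hFd : ∀ x, HasDerivAt F (F' x) x := fun x => (hfd x).norm_sq
  have hFc : Continuous F := (hf.continuous).norm.pow 2
  have hderivc : Continuous (deriv f) := hf.continuous_deriv (by simp)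
  have hF'c : Continuous F' := continuous_const.mul ((hf.continuous).inner hderivc)
  have hsinne : ∀ x ∈ Icc a b, Real.sin x ≠ 0 := by
    intro x hx
    have hx' := hIccsub hx
    exact ne_of_gt (Real.sin_pos_of_pos_of_lt_pi hx'.1 (lt_trans hx'.2 (by linarith [Real.pi_gt_three])))
  have hc_rpow : ∀ p : ℝ, ContinuousOn (fun x : ℝ => x ^ p) (Icc a b) := fun p x hx =>
    (Real.continuousAt_rpow_const x p (Or.inl (ne_of_gt (hIccsub hx).1))).continuousWithinAt
  have hc_cot : ContinuousOn (fun x => Real.cos x / Real.sin x) (Icc a b) :=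
    Real.continuous_cos.continuousOn.div Real.continuous_sin.continuousOn hsinne
  have hc_sin2 : ContinuousOn (fun x => (Real.sin x) ^ 2) (Icc a b) :=
    (Real.continuous_sin.pow 2).continuousOn
  have hsin2ne : ∀ x ∈ Icc a b, (Real.sin x) ^ 2 ≠ 0 := fun x hx => pow_ne_zero 2 (hsinne x hx)
  -- the weight φ and its derivative
  set φ : ℝ → ℝ := fun x => x ^ (γ/2) * (Real.cos x / Real.sin x) with hφ
  set φ' : ℝ → ℝ := fun x =>
    (γ/2) * x ^ (γ/2 - 1) * (Real.cos x / Real.sin x) - x ^ (γ/2) / (Real.sin x) ^ 2 with hφ'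
  have hφd : ∀ x ∈ Ioo a b, HasDerivAt φ (φ' x) x := by
    intro x hx
    have hx' : x ∈ Icc a b := ⟨hx.1.le, hx.2.le⟩
    have hsx := hsinne x hx'
    have h1 : HasDerivAt (fun y : ℝ => y ^ (γ/2)) ((γ/2) * x ^ (γ/2 - 1)) x :=
      Real.hasDerivAt_rpow_const (Or.inl (ne_of_gt (hIccsub hx').1))
    have h2 : HasDerivAt (fun y => Real.cos y / Real.sin y)
        ((-Real.sin x * Real.sin x - Real.cos x * Real.cos x) / (Real.sin x) ^ 2) x :=
      (Real.hasDerivAt_cos x).div (Real.hasDerivAt_sin x) hsx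
    have := h1.mul h2
    refine this.congr_deriv ?_
    have hpyth := Real.sin_sq_add_cos_sq x
    have : -Real.sin x * Real.sin x - Real.cos x * Real.cos x = -1 := by nlinarith
    simp only [hφ']
    rw [this]
    ring
  have hφc : ContinuousOn φ (Icc a b) := (hc_rpow (γ/2)).mul hc_cot
  have hφ'c : ContinuousOn φ' (Icc a b) :=
    ((continuousOn_const.mul (hc_rpow (γ/2 - 1))).mul hc_cot).sub
      ((hc_rpow (γ/2)).div hc_sin2 hsin2ne)
  -- interval integrability facts
  have hint_rpowF : ∀ p : ℝ, IntervalIntegrable (fun x => x ^ p * F x) volume a b := by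
    intro p
    exact ((hc_rpow p).mul hFc.continuousOn).intervalIntegrable_of_Icc hab.le
  have hint_F : IntervalIntegrable F volume a b := hFc.intervalIntegrable a b
  have hint_φF' : IntervalIntegrable (fun x => φ x * F' x) volume a b :=
    (hφc.mul hF'c.continuousOn).intervalIntegrable_of_Icc hab.le
  have hint_φ'F : IntervalIntegrable (fun x => φ' x * F x) volume a b :=
    (hφ'c.mul hFc.continuousOn).intervalIntegrable_of_Icc hab.le
  have hint_cotF : IntervalIntegrable (fun x => x ^ (γ/2 - 1) * (Real.cos x / Real.sin x) * F x)
      volume a b :=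
    (((hc_rpow (γ/2 - 1)).mul hc_cot).mul hFc.continuousOn).intervalIntegrable_of_Icc hab.le
  have hint_Fsin2 : IntervalIntegrable (fun x => F x / (Real.sin x) ^ 2) volume a b :=
    ((hFc.continuousOn.div hc_sin2 hsin2ne)).intervalIntegrable_of_Icc hab.le
  have hint_rpowsin2F : IntervalIntegrable (fun x => x ^ (γ/2) / (Real.sin x) ^ 2 * F x)
      volume a b :=
    (((hc_rpow (γ/2)).div hc_sin2 hsin2ne).mul hFc.continuousOn).intervalIntegrable_of_Icc hab.le
  have hint_cot2F : IntervalIntegrable (fun x => (α * (Real.cos x / Real.sin x))^2 * F x)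
      volume a b :=
    (((continuousOn_const.mul hc_cot).pow 2).mul hFc.continuousOn).intervalIntegrable_of_Icc hab.le
  have hint_rpow2D : IntervalIntegrable (fun x => (x ^ (γ/2))^2 * ‖deriv f x‖^2) volume a b :=
    (((hc_rpow (γ/2)).pow 2).mul ((hderivc.norm.pow 2).continuousOn)).intervalIntegrable_of_Icc hab.le
  have hint_αφF' : IntervalIntegrable (fun x => (x ^ (γ/2) * (α * (Real.cos x / Real.sin x))) * F' x)
      volume a b := by
    have : (fun x => (x ^ (γ/2) * (α * (Real.cos x / Real.sin x))) * F' x)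
        = fun x => α * (φ x * F' x) := by funext x; rw [hφ]; ring
    rw [this]
    exact hint_φF'.const_mul α
  -- integration by parts
  have hφF_a : F a = 0 := by
    have := (hvan a (fun h => lt_irrefl a h.1)).1
    simp [hF, this]
  have hφF_b : F b = 0 := by
    have := (hvan b (fun h => lt_irrefl b h.2)).1
    simp [hF, this]
  have hibp : (∫ x in a..b, (φ' x * F x + φ x * F' x)) = 0 := by
    have h := intervalIntegral.integral_deriv_mul_eq_sub_of_hasDerivAt
      (u := φ) (v := F) (u' := φ') (v' := F') (a := a) (b := b)
      (by rwa [huIcc]) (by exact hFc.continuousOn)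
      (by rw [min_eq_left hab.le, max_eq_right hab.le]; exact hφd)
      (by intro x _; exact hFd x)
      (hφ'c.intervalIntegrable_of_Icc hab.le) (hF'c.intervalIntegrable a b)
    rw [h, hφF_a, hφF_b]; ring
  have hibp' : (∫ x in a..b, φ x * F' x) = - ∫ x in a..b, φ' x * F x := by
    have := intervalIntegral.integral_add hint_φ'F hint_φF'
    rw [hibp] at this
    linarith [this.symm]
  -- the key nonnegativity
  have key : (0:ℝ) ≤ ∫ x in a..b,
      ‖(x ^ (γ/2)) • deriv f x + (α * (Real.cos x / Real.sin x)) • f x‖ ^ 2 :=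
    intervalIntegral.integral_nonneg hab.le (fun x _ => by positivity)
  -- expand the square
  have hexpand : ∀ x : ℝ, ‖(x ^ (γ/2)) • deriv f x + (α * (Real.cos x / Real.sin x)) • f x‖ ^ 2
      = (x ^ (γ/2))^2 * ‖deriv f x‖^2
        + (x ^ (γ/2) * (α * (Real.cos x / Real.sin x))) * F' x
        + (α * (Real.cos x / Real.sin x))^2 * F x := by
    intro x
    rw [norm_add_sq_real, real_inner_smul_left, real_inner_smul_right,
      norm_smul, norm_smul, real_inner_comm]
    simp only [hF, hF', Real.norm_eq_abs, mul_pow, sq_abs]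
    ring
  have hsplit : (∫ x in a..b,
        ‖(x ^ (γ/2)) • deriv f x + (α * (Real.cos x / Real.sin x)) • f x‖ ^ 2)
      = (∫ x in a..b, (x ^ (γ/2))^2 * ‖deriv f x‖^2)
        + ((∫ x in a..b, (x ^ (γ/2) * (α * (Real.cos x / Real.sin x))) * F' x)
        + ∫ x in a..b, (α * (Real.cos x / Real.sin x))^2 * F x) := by
    rw [← intervalIntegral.integral_add hint_αφF' hint_cot2F,
      ← intervalIntegral.integral_add hint_rpow2D (hint_αφF'.add hint_cot2F)]
    apply intervalIntegral.integral_congr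
    intro x _
    show ‖(x ^ (γ/2)) • deriv f x + (α * (Real.cos x / Real.sin x)) • f x‖ ^ 2
      = (x ^ (γ/2))^2 * ‖deriv f x‖^2
        + ((x ^ (γ/2) * (α * (Real.cos x / Real.sin x))) * F' x
        + (α * (Real.cos x / Real.sin x))^2 * F x)
    rw [hexpand x]; ring
  -- identify the pieces
  have hT1 : (∫ x in a..b, (x ^ (γ/2))^2 * ‖deriv f x‖^2)
      = ∫ x in a..b, x ^ γ * ‖deriv f x‖^2 := by
    apply intervalIntegral.integral_congr
    intro x hx
    rw [huIcc] at hx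
    have hx0 : (0:ℝ) < x := (hIccsub hx).1
    show (x ^ (γ/2))^2 * ‖deriv f x‖^2 = x ^ γ * ‖deriv f x‖^2
    rw [← Real.rpow_natCast (x ^ (γ/2)) 2, ← Real.rpow_mul hx0.le]
    norm_num
  have hT2 : (∫ x in a..b, (x ^ (γ/2) * (α * (Real.cos x / Real.sin x))) * F' x)
      = α * ∫ x in a..b, φ x * F' x := by
    rw [← intervalIntegral.integral_const_mul]
    apply intervalIntegral.integral_congr
    intro x _
    show x ^ (γ/2) * (α * (Real.cos x / Real.sin x)) * F' x = α * (φ x * F' x)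
    rw [hφ]; ring
  have hT2' : (∫ x in a..b, φ' x * F x)
      = (γ/2) * (∫ x in a..b, x ^ (γ/2 - 1) * (Real.cos x / Real.sin x) * F x)
        - ∫ x in a..b, x ^ (γ/2) / (Real.sin x) ^ 2 * F x := by
    rw [← intervalIntegral.integral_const_mul, ← intervalIntegral.integral_sub
      (hint_cotF.const_mul _) hint_rpowsin2F]
    apply intervalIntegral.integral_congr
    intro x _
    show φ' x * F x = γ/2 * (x ^ (γ/2 - 1) * (Real.cos x / Real.sin x) * F x)
      - x ^ (γ/2) / (Real.sin x) ^ 2 * F x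
    rw [hφ']; ring
  have hT3 : (∫ x in a..b, (α * (Real.cos x / Real.sin x))^2 * F x)
      = α^2 * (∫ x in a..b, F x / (Real.sin x) ^ 2) - α^2 * ∫ x in a..b, F x := by
    rw [← intervalIntegral.integral_const_mul, ← intervalIntegral.integral_const_mul,
      ← intervalIntegral.integral_sub (hint_Fsin2.const_mul _) (hint_F.const_mul _)]
    apply intervalIntegral.integral_congr
    intro x hx
    rw [huIcc] at hx
    have hs := hsinne x hx
    have hpyth := Real.sin_sq_add_cos_sq x
    have hcot2 : (Real.cos x / Real.sin x)^2 = 1 / (Real.sin x)^2 - 1 := by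
      field_simp
      nlinarith
    show (α * (Real.cos x / Real.sin x))^2 * F x
      = α^2 * (F x / (Real.sin x) ^ 2) - α^2 * F x
    rw [mul_pow, hcot2]
    field_simp
  -- the third goal integral splits
  have hC3 : (∫ x in a..b, ((α + x ^ (γ / 2)) / (Real.sin x) ^ 2) * F x)
      = α * (∫ x in a..b, F x / (Real.sin x) ^ 2)
        + ∫ x in a..b, x ^ (γ/2) / (Real.sin x) ^ 2 * F x := by
    rw [← intervalIntegral.integral_const_mul,
      ← intervalIntegral.integral_add (hint_Fsin2.const_mul _) hint_rpowsin2F]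
    apply intervalIntegral.integral_congr
    intro x _
    show ((α + x ^ (γ / 2)) / (Real.sin x) ^ 2) * F x
      = α * (F x / (Real.sin x) ^ 2) + x ^ (γ/2) / (Real.sin x) ^ 2 * F x
    ring
  -- rewrite goal integrals as interval integrals
  have hg1 : (∫ x in Ioo (0:ℝ) 1, x ^ γ * ‖deriv f x‖ ^ 2)
      = ∫ x in a..b, x ^ γ * ‖deriv f x‖ ^ 2 := by
    apply hred
    intro x hx
    simp [(hvan x hx).2]
  have hg2 : (∫ x in Ioo (0:ℝ) 1, ‖f x‖ ^ 2) = ∫ x in a..b, F x := by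
    apply hred
    intro x hx
    simp [hF, (hvan x hx).1]
  have hg3 : (∫ x in Ioo (0:ℝ) 1, ((α + x ^ (γ / 2)) / (Real.sin x) ^ 2) * ‖f x‖ ^ 2)
      = ∫ x in a..b, ((α + x ^ (γ / 2)) / (Real.sin x) ^ 2) * F x := by
    apply hred
    intro x hx
    simp [hF, (hvan x hx).1]
  have hg4 : (∫ x in Ioo (0:ℝ) 1, x ^ (γ / 2 - 1) * (Real.cos x / Real.sin x) * ‖f x‖ ^ 2)
      = ∫ x in a..b, x ^ (γ / 2 - 1) * (Real.cos x / Real.sin x) * F x := by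
    apply hred
    intro x hx
    simp [hF, (hvan x hx).1]
  rw [ge_iff_le, hg1, hg2, hg3, hg4]
  rw [hsplit, hT1, hT2, hibp', hT2', hT3] at key
  rw [hC3]
  nlinarith [key]
end

section
/- For every γ ∈ ℝ and every complex-valued f ∈ C_0^∞((0,∞)) one has the power weighted Rellich inequality ∫_0^∞ x^γ |f''(x)|² dx ≥ ( (γ−1)(γ−3)/4 )² ∫_0^∞ x^{γ−4} |f(x)|² dx. -/
open MeasureTheory Set

private lemma red_integral {F : ℝ → ℝ} {a b : ℝ} (ha : 0 < a) (hab : a ≤ b)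
    (h0 : ∀ x, x ∉ Ioc a b → F x = 0) :
    ∫ x in Ioi (0 : ℝ), F x = ∫ x in a..b, F x := by
  rw [intervalIntegral.integral_of_le hab]
  exact setIntegral_eq_of_subset_of_forall_diff_eq_zero measurableSet_Ioi
    (fun x hx => lt_trans ha hx.1) (fun x hx => h0 x hx.2)

private lemma hardy_ineq (α : ℝ) (g : ℝ → ℂ) (hg : ContDiff ℝ (((⊤ : ℕ∞)) : WithTop ℕ∞) g)
    (hc : HasCompactSupport g) (hs : tsupport g ⊆ Ioi (0 : ℝ)) :
    ((α - 1) / 2) ^ 2 * ∫ x in Ioi (0 : ℝ), x ^ (α - 2) * ‖g x‖ ^ 2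
      ≤ ∫ x in Ioi (0 : ℝ), x ^ α * ‖deriv g x‖ ^ 2 := by
  obtain ⟨m, M, hm, hKsub⟩ : ∃ m M : ℝ, 0 < m ∧ tsupport g ⊆ Icc m M := by
    rcases eq_empty_or_nonempty (tsupport g) with h | h
    · exact ⟨1, 2, one_pos, by simp [h]⟩
    · have hK : IsCompact (tsupport g) := hc
      exact ⟨sInf (tsupport g), sSup (tsupport g), hs (hK.sInf_mem h),
        fun x hx => ⟨csInf_le hK.bddBelow hx, le_csSup hK.bddAbove hx⟩⟩
  set a : ℝ := m / 2 with ha_def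
  set b : ℝ := max M (m / 2) + 1 with hb_def
  have ha : 0 < a := by positivity
  have hab : a ≤ b := ((le_max_right M (m / 2)).trans (lt_add_one _).le)
  have hsub2 : tsupport g ⊆ Ioo a b := by
    intro x hx
    rcases hKsub hx with ⟨h1, h2⟩
    exact ⟨lt_of_lt_of_le (by linarith) h1,
      ((h2.trans (le_max_left M (m / 2))).trans_lt (lt_add_one _))⟩
  have hgz : ∀ x, x ∉ Ioo a b → g x = 0 := fun x hx =>
    image_eq_zero_of_notMem_tsupport (fun hmem => hx (hsub2 hmem))
  have hdz : ∀ x, x ∉ Ioo a b → deriv g x = 0 := by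
    intro x hx
    by_contra h
    exact hx (hsub2 (support_deriv_subset h))
  have hpos : ∀ x ∈ Set.uIcc a b, 0 < x := by
    rw [uIcc_of_le hab]; intro x hx; exact lt_of_lt_of_le ha hx.1
  have hgc : Continuous g := hg.continuous
  have hgd : Differentiable ℝ g := hg.differentiable (by simp)
  have hdc : Continuous (deriv g) := hg.continuous_deriv (by simp)
  have hrp : ∀ p : ℝ, ContinuousOn (fun x : ℝ => x ^ p) (Set.uIcc a b) := fun p x hx =>
    (Real.continuousAt_rpow_const x p (Or.inl (hpos x hx).ne')).continuousWithinAt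
  have hinn : Continuous (fun x => (inner ℝ (g x) (deriv g x) : ℝ)) := hgc.inner hdc
  -- reduce to interval integrals
  rw [red_integral ha hab (fun x hx => by
        rw [hgz x (fun hx2 => hx (Ioo_subset_Ioc_self hx2))]; simp),
      red_integral ha hab (fun x hx => by
        rw [hdz x (fun hx2 => hx (Ioo_subset_Ioc_self hx2))]; simp)]
  set c : ℝ := (α - 1) / 2 with hc_def
  set I : ℝ := ∫ x in a..b, x ^ (α - 2) * ‖g x‖ ^ 2 with hI_def
  set Mi : ℝ := ∫ x in a..b, x ^ (α - 1) * (inner ℝ (g x) (deriv g x) : ℝ) with hM_def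
  set K : ℝ := ∫ x in a..b, x ^ α * ‖deriv g x‖ ^ 2 with hK_def
  have hIint : IntervalIntegrable (fun x : ℝ => x ^ (α - 2) * ‖g x‖ ^ 2) volume a b :=
    ((hrp (α - 2)).mul (hgc.norm.pow 2).continuousOn).intervalIntegrable
  have hMint : IntervalIntegrable
      (fun x : ℝ => x ^ (α - 1) * (inner ℝ (g x) (deriv g x) : ℝ)) volume a b :=
    ((hrp (α - 1)).mul hinn.continuousOn).intervalIntegrable
  have hKint : IntervalIntegrable (fun x : ℝ => x ^ α * ‖deriv g x‖ ^ 2) volume a b :=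
    ((hrp α).mul (hdc.norm.pow 2).continuousOn).intervalIntegrable
  -- FTC: integral of derivative of x^(α-1)*‖g x‖² is zero
  have key : ∀ x ∈ Set.uIcc a b, HasDerivAt (fun y : ℝ => y ^ (α - 1) * ‖g y‖ ^ 2)
      ((α - 1) * (x ^ (α - 2) * ‖g x‖ ^ 2)
        + 2 * (x ^ (α - 1) * (inner ℝ (g x) (deriv g x) : ℝ))) x := by
    intro x hx
    have hx0 : x ≠ 0 := (hpos x hx).ne'
    have h1 : HasDerivAt (fun y : ℝ => y ^ (α - 1)) ((α - 1) * x ^ (α - 2)) x := by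
      have := Real.hasDerivAt_rpow_const (x := x) (p := α - 1) (Or.inl hx0)
      simpa [show α - 1 - 1 = α - 2 by ring] using this
    have h2 : HasDerivAt (fun y : ℝ => ‖g y‖ ^ 2)
        (2 * (inner ℝ (g x) (deriv g x) : ℝ)) x := by
      have h3 := HasDerivAt.inner (𝕜 := ℝ) (hgd x).hasDerivAt (hgd x).hasDerivAt
      have h4 : (fun t : ℝ => (inner ℝ (g t) (g t) : ℝ)) = fun t : ℝ => ‖g t‖ ^ 2 := by
        funext t; exact real_inner_self_eq_norm_sq (g t)
      rw [h4] at h3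
      rw [real_inner_comm (g x) (deriv g x)] at h3
      exact h3.congr_deriv (by ring)
    have := h1.mul h2
    exact this.congr_deriv (by ring)
  have hzero : (α - 1) * I + 2 * Mi = 0 := by
    have hint : IntervalIntegrable (fun x : ℝ =>
        (α - 1) * (x ^ (α - 2) * ‖g x‖ ^ 2)
          + 2 * (x ^ (α - 1) * (inner ℝ (g x) (deriv g x) : ℝ))) volume a b :=
      ((hIint.const_mul (α - 1)).add (hMint.const_mul 2))
    have h5 := intervalIntegral.integral_eq_sub_of_hasDerivAt key hint
    rw [hgz a (by simp), hgz b (by simp)] at h5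
    simp only [norm_zero] at h5
    rw [intervalIntegral.integral_add (hIint.const_mul (α - 1)) (hMint.const_mul 2),
      intervalIntegral.integral_const_mul, intervalIntegral.integral_const_mul] at h5
    rw [hI_def, hM_def]
    convert h5 using 2 <;> ring
  -- positivity: complete the square
  have hsq : (0:ℝ) ≤ K + 2 * c * Mi + c ^ 2 * I := by
    have hptws : ∀ x ∈ Set.uIcc a b,
        (x ^ α * ‖deriv g x‖ ^ 2 + 2 * c * (x ^ (α - 1) * (inner ℝ (g x) (deriv g x) : ℝ))
          + c ^ 2 * (x ^ (α - 2) * ‖g x‖ ^ 2))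
        = ‖(x ^ (α / 2) : ℝ) • deriv g x + ((c * x ^ (α / 2 - 1) : ℝ)) • g x‖ ^ 2 := by
      intro x hx
      have hx0 : 0 < x := hpos x hx
      rw [norm_add_sq_real, norm_smul, norm_smul, real_inner_smul_left, real_inner_smul_right,
        mul_pow, mul_pow]
      have e1 : |(x ^ (α / 2) : ℝ)| ^ 2 = x ^ α := by
        rw [abs_of_nonneg (Real.rpow_nonneg hx0.le _), ← Real.rpow_natCast (x ^ (α / 2)) 2,
          ← Real.rpow_mul hx0.le]
        norm_num
      have e2 : |(c * x ^ (α / 2 - 1) : ℝ)| ^ 2 = c ^ 2 * x ^ (α - 2) := by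
        rw [abs_mul, mul_pow, sq_abs, abs_of_nonneg (Real.rpow_nonneg hx0.le _),
          ← Real.rpow_natCast (x ^ (α / 2 - 1)) 2, ← Real.rpow_mul hx0.le]
        norm_num
        left
        ring_nf
      have e3 : (x ^ (α / 2) : ℝ) * (c * x ^ (α / 2 - 1)) = c * x ^ (α - 1) := by
        rw [mul_comm c, ← mul_assoc, ← Real.rpow_add hx0]
        ring_nf
      simp only [Real.norm_eq_abs]
      rw [e1, e2, real_inner_comm (deriv g x) (g x),
        show x ^ (α / 2) * (c * x ^ (α / 2 - 1) * (inner ℝ (deriv g x) (g x) : ℝ))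
          = c * x ^ (α - 1) * (inner ℝ (deriv g x) (g x) : ℝ) from by rw [← mul_assoc, e3]]
      ring
    have h6 : K + 2 * c * Mi + c ^ 2 * I
        = ∫ x in a..b, (x ^ α * ‖deriv g x‖ ^ 2
            + 2 * c * (x ^ (α - 1) * (inner ℝ (g x) (deriv g x) : ℝ))
            + c ^ 2 * (x ^ (α - 2) * ‖g x‖ ^ 2)) := by
      rw [intervalIntegral.integral_add (hKint.add (hMint.const_mul (2 * c)))
          (hIint.const_mul (c ^ 2)),
        intervalIntegral.integral_add hKint (hMint.const_mul (2 * c)),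
        intervalIntegral.integral_const_mul, intervalIntegral.integral_const_mul]
    rw [h6, intervalIntegral.integral_congr hptws]
    exact intervalIntegral.integral_nonneg hab (fun x hx => sq_nonneg _)
  have hMi : Mi = -c * I := by rw [hc_def]; linarith
  rw [hMi] at hsq
  nlinarith [hsq]

theorem stmt_18 (γ : ℝ) (f : ℝ → ℂ) (hf : ContDiff ℝ (⊤ : ℕ∞) f) (hsupp : HasCompactSupport f)
    (hsub : tsupport f ⊆ Ioi (0 : ℝ)) :
    ∫ x in Ioi (0 : ℝ), x ^ γ * ‖iteratedDeriv 2 f x‖ ^ 2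
      ≥ ((γ - 1) * (γ - 3) / 4) ^ 2 * ∫ x in Ioi (0 : ℝ), x ^ (γ - 4) * ‖f x‖ ^ 2 := by
  have hf1 : ContDiff ℝ (((⊤ : ℕ∞)) : WithTop ℕ∞) f := hf.of_le (by simp)
  have hfd : ContDiff ℝ (((⊤ : ℕ∞)) : WithTop ℕ∞) (deriv f) := (contDiff_infty_iff_deriv.mp hf1).2
  have hcd : HasCompactSupport (deriv f) := hsupp.deriv
  have hsd : tsupport (deriv f) ⊆ Ioi (0 : ℝ) :=
    (closure_minimal support_deriv_subset (isClosed_tsupport f)).trans hsub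
  have h1 := hardy_ineq γ (deriv f) hfd hcd hsd
  have h2 := hardy_ineq (γ - 2) f hf1 hsupp hsub
  rw [show γ - 2 - 2 = γ - 4 from by ring, show γ - 2 - 1 = γ - 3 from by ring] at h2
  rw [ge_iff_le, show iteratedDeriv 2 f = deriv (deriv f) from by
    rw [show (2 : ℕ) = 1 + 1 from rfl, iteratedDeriv_succ, iteratedDeriv_one]]
  have hmul := mul_le_mul_of_nonneg_left h2 (sq_nonneg ((γ - 1) / 2))
  have heq : ((γ - 1) * (γ - 3) / 4) ^ 2 * (∫ x in Ioi (0 : ℝ), x ^ (γ - 4) * ‖f x‖ ^ 2)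
      = ((γ - 1) / 2) ^ 2 * (((γ - 3) / 2) ^ 2 * ∫ x in Ioi (0 : ℝ), x ^ (γ - 4) * ‖f x‖ ^ 2) := by
    ring
  linarith
end

section
/- For every β ∈ ℝ and every complex-valued f ∈ C_0^∞((0,π)) one has ∫_0^π |f''(x)|² dx ≥ (2β+1) ∫_0^π |f'(x)|² dx + ∫_0^π ( β/sin²(x) − β² ) |f(x)|² dx. -/
open MeasureTheory Set

namespace Stmt19Aux

lemma nsq (z : ℂ) : ‖z‖ ^ 2 = z.re * z.re + z.im * z.im := by
  rw [Complex.sq_norm, Complex.normSq_apply]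

lemma continuous_glue {K : Set ℝ} (hK : IsClosed K) (hKs : K ⊆ Ioo 0 Real.pi)
    (φ : ℝ → ℝ) (h1 : ContinuousOn φ (Ioo 0 Real.pi)) (h0 : ∀ x ∉ K, φ x = 0) :
    Continuous φ := by
  rw [continuous_iff_continuousAt]
  intro x
  by_cases hx : x ∈ Ioo 0 Real.pi
  · exact h1.continuousAt (isOpen_Ioo.mem_nhds hx)
  · have hxK : x ∉ K := fun h => hx (hKs h)
    have hev : φ =ᶠ[nhds x] (fun _ => 0) := by
      filter_upwards [hK.isOpen_compl.mem_nhds hxK] with y hy using h0 y hy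
    exact ContinuousAt.congr continuousAt_const hev.symm

lemma hasDerivAt_glue {K : Set ℝ} (hK : IsClosed K) (hKs : K ⊆ Ioo 0 Real.pi)
    (G φ : ℝ → ℝ) (h1 : ∀ x ∈ Ioo 0 Real.pi, HasDerivAt G (φ x) x)
    (h0G : ∀ x ∉ K, G x = 0) (h0φ : ∀ x ∉ K, φ x = 0) :
    ∀ x, HasDerivAt G (φ x) x := by
  intro x
  by_cases hx : x ∈ Ioo 0 Real.pi
  · exact h1 x hx
  · have hxK : x ∉ K := fun h => hx (hKs h)
    have hG : G =ᶠ[nhds x] (fun _ => (0 : ℝ)) := by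
      filter_upwards [hK.isOpen_compl.mem_nhds hxK] with y hy using h0G y hy
    rw [h0φ x hxK]
    exact (hasDerivAt_const x (0 : ℝ)).congr_of_eventuallyEq hG

lemma integral_eq_zero_of_hasDerivAt (G φ : ℝ → ℝ)
    (hd : ∀ x, HasDerivAt G (φ x) x) (hφ : Continuous φ)
    (hGsupp : HasCompactSupport G) (hGsub : tsupport G ⊆ Iio Real.pi) :
    ∫ x, φ x = 0 := by
  have hder : deriv G = φ := funext fun x => (hd x).deriv
  have hG1 : ContDiff ℝ 1 G :=
    contDiff_one_iff_deriv.mpr ⟨fun x => (hd x).differentiableAt, hder ▸ hφ⟩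
  have h1 : ∫ x in Iic Real.pi, deriv G x = G Real.pi :=
    HasCompactSupport.integral_Iic_deriv_eq hG1 hGsupp Real.pi
  have h2 : ∫ x in Iic Real.pi, φ x = ∫ x, φ x := by
    apply setIntegral_eq_integral_of_forall_compl_eq_zero
    intro x hx
    have hxs : x ∉ tsupport G := fun h => hx (mem_Iic.mpr (le_of_lt (mem_Iio.mp (hGsub h))))
    rw [← hder]
    by_contra h
    exact hxs (support_deriv_subset (by simpa using h))
  have h3 : G Real.pi = 0 :=
    image_eq_zero_of_notMem_tsupport (fun h => lt_irrefl _ (mem_Iio.mp (hGsub h)))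
  rw [← h2, ← hder, h1, h3]

end Stmt19Aux

open Stmt19Aux

set_option maxHeartbeats 1000000 in
theorem stmt_19 (β : ℝ) (f : ℝ → ℂ) (hf : ContDiff ℝ (⊤ : ℕ∞) f) (hsupp : HasCompactSupport f)
    (hsub : tsupport f ⊆ Ioo 0 Real.pi) :
    ∫ x in Ioo (0 : ℝ) Real.pi, ‖iteratedDeriv 2 f x‖ ^ 2
      ≥ (2 * β + 1) * (∫ x in Ioo (0 : ℝ) Real.pi, ‖deriv f x‖ ^ 2)
        + ∫ x in Ioo (0 : ℝ) Real.pi, (β / (Real.sin x) ^ 2 - β ^ 2) * ‖f x‖ ^ 2 := by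
  set K := tsupport f with hK
  have hKcl : IsClosed K := isClosed_tsupport f
  have hKc : IsCompact K := hsupp
  set f1 := deriv f with hf1def
  set f2 := deriv f1 with hf2def
  -- basic facts
  have hfinf : ContDiff ℝ ((⊤ : ℕ∞) : WithTop ℕ∞) f := hf.of_le (by simp)
  have hf1smooth : ContDiff ℝ ((⊤ : ℕ∞) : WithTop ℕ∞) f1 := (contDiff_infty_iff_deriv.mp hfinf).2
  have hf2smooth : ContDiff ℝ ((⊤ : ℕ∞) : WithTop ℕ∞) f2 := (contDiff_infty_iff_deriv.mp hf1smooth).2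
  have hd1 : ∀ x, HasDerivAt f (f1 x) x := fun x =>
    ((hfinf.differentiable (by simp)) x).hasDerivAt
  have hd2 : ∀ x, HasDerivAt f1 (f2 x) x := fun x =>
    ((hf1smooth.differentiable (by simp)) x).hasDerivAt
  have hcont0 : Continuous f := hfinf.continuous
  have hcont1 : Continuous f1 := hf1smooth.continuous
  have hcont2 : Continuous f2 := hf2smooth.continuous
  have hK0 : ∀ x ∉ K, f x = 0 := fun x hx => image_eq_zero_of_notMem_tsupport hx
  have hts1 : tsupport f1 ⊆ K := closure_minimal support_deriv_subset hKcl
  have hK1 : ∀ x ∉ K, f1 x = 0 := by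
    intro x hx
    by_contra h
    exact hx (hts1 (subset_closure h))
  have hK2 : ∀ x ∉ K, f2 x = 0 := by
    intro x hx
    by_contra h
    exact hx (hts1 (support_deriv_subset (by simpa using h)))
  -- the cotangent function and basic trig facts
  set c : ℝ → ℝ := fun x => Real.cos x / Real.sin x with hcdef
  have hsin : ∀ x ∈ Ioo (0 : ℝ) Real.pi, Real.sin x ≠ 0 := fun x hx =>
    ne_of_gt (Real.sin_pos_of_pos_of_lt_pi hx.1 hx.2)
  have hc : ∀ x ∈ Ioo (0 : ℝ) Real.pi, HasDerivAt c (-(1 / Real.sin x ^ 2)) x := by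
    intro x hx
    have h := (Real.hasDerivAt_cos x).div (Real.hasDerivAt_sin x) (hsin x hx)
    refine h.congr_deriv ?_
    have hs := Real.sin_sq_add_cos_sq x
    have hnum : -Real.sin x * Real.sin x - Real.cos x * Real.cos x = -1 := by nlinarith
    rw [hnum]
    ring
  -- the real-valued auxiliary functions
  set N0 : ℝ → ℝ := fun x => ‖f x‖ ^ 2 with hN0def
  set N1 : ℝ → ℝ := fun x => ‖f1 x‖ ^ 2 with hN1def
  set N2 : ℝ → ℝ := fun x => ‖f2 x‖ ^ 2 with hN2def
  set P01 : ℝ → ℝ := fun x => 2 * ((starRingEnd ℂ) (f x) * f1 x).re with hP01def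
  set P02 : ℝ → ℝ := fun x => 2 * ((starRingEnd ℂ) (f x) * f2 x).re with hP02def
  set P12 : ℝ → ℝ := fun x => 2 * ((starRingEnd ℂ) (f1 x) * f2 x).re with hP12def
  -- derivatives of the auxiliary functions
  have hN0' : ∀ x, HasDerivAt N0 (P01 x) x := by
    intro x
    have h := (hd1 x).norm_sq
    rw [Complex.inner] at h
    exact h.congr_deriv (by rw [hP01def, mul_comm (f1 x)])
  have hN1' : ∀ x, HasDerivAt N1 (P12 x) x := by
    intro x
    have h := (hd2 x).norm_sq
    rw [Complex.inner] at h
    exact h.congr_deriv (by rw [hP12def, mul_comm (f2 x)])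
  have hP01' : ∀ x, HasDerivAt P01 (2 * N1 x + P02 x) x := by
    intro x
    have h := (Complex.reCLM.hasFDerivAt.comp_hasDerivAt x
      (((hd1 x).star).mul (hd2 x))).const_mul (2 : ℝ)
    refine h.congr_deriv ?_
    simp only [Function.comp, Complex.reCLM_apply, Complex.star_def, Complex.add_re,
      Complex.mul_re, Complex.conj_re, Complex.conj_im, hN1def, hP02def, nsq]
    ring
  -- continuity of the auxiliary functions
  have hcN0 : Continuous N0 := by continuity
  have hcN1 : Continuous N1 := by continuity
  have hcN2 : Continuous N2 := by continuity
  have hcP01 : Continuous P01 := by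
    apply Continuous.mul continuous_const
    exact Complex.continuous_re.comp ((Complex.continuous_conj.comp hcont0).mul hcont1)
  have hcP02 : Continuous P02 := by
    apply Continuous.mul continuous_const
    exact Complex.continuous_re.comp ((Complex.continuous_conj.comp hcont0).mul hcont2)
  have hcP12 : Continuous P12 := by
    apply Continuous.mul continuous_const
    exact Complex.continuous_re.comp ((Complex.continuous_conj.comp hcont1).mul hcont2)
  have hcc : ContinuousOn c (Ioo (0 : ℝ) Real.pi) :=
    Real.continuous_cos.continuousOn.div Real.continuous_sin.continuousOn hsin
  have hcinv : ContinuousOn (fun x => 1 / Real.sin x ^ 2) (Ioo (0 : ℝ) Real.pi) :=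
    continuousOn_const.div ((Real.continuous_sin.pow 2).continuousOn)
      (fun x hx => pow_ne_zero 2 (hsin x hx))
  -- generic integrability helper
  have myInt : ∀ (X : ℝ → ℝ), Continuous X → (∀ x ∉ K, X x = 0) → Integrable X := by
    intro X hX hXK
    have hsupp : Function.support X ⊆ K := by
      intro x hx
      by_contra h
      exact hx (hXK x h)
    have : HasCompactSupport X :=
      HasCompactSupport.of_support_subset_isCompact hKc hsupp
    exact hX.integrable_of_hasCompactSupport this
  -- the three integration-by-parts identities
  set φ2 : ℝ → ℝ := fun x => 2 * N1 x + P02 x with hφ2def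
  set φA : ℝ → ℝ := fun x => c x * P12 x - (1 / Real.sin x ^ 2) * N1 x with hφAdef
  set φB : ℝ → ℝ := fun x => c x * P01 x - (1 / Real.sin x ^ 2) * N0 x with hφBdef
  have hφ2cont : Continuous φ2 := ((continuous_const.mul hcN1).add hcP02)
  have hφ2K : ∀ x ∉ K, φ2 x = 0 := by
    intro x hx
    simp [hφ2def, hN1def, hP02def, hK1 x hx, hK0 x hx]
  have hφAK : ∀ x ∉ K, φA x = 0 := by
    intro x hx
    simp [hφAdef, hN1def, hP12def, hK1 x hx]
  have hφBK : ∀ x ∉ K, φB x = 0 := by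
    intro x hx
    simp [hφBdef, hN0def, hP01def, hK0 x hx]
  have hφAcont : Continuous φA :=
    continuous_glue hKcl hsub φA
      ((hcc.mul hcP12.continuousOn).sub (hcinv.mul hcN1.continuousOn)) hφAK
  have hφBcont : Continuous φB :=
    continuous_glue hKcl hsub φB
      ((hcc.mul hcP01.continuousOn).sub (hcinv.mul hcN0.continuousOn)) hφBK
  have tsuppIio : ∀ (X : ℝ → ℝ), (∀ x ∉ K, X x = 0) → tsupport X ⊆ Iio Real.pi := by
    intro X hXK
    have h1 : Function.support X ⊆ K := by
      intro x hx
      by_contra h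
      exact hx (hXK x h)
    refine (closure_minimal h1 hKcl).trans (hsub.trans ?_)
    exact fun y hy => hy.2
  have hcompl : ∀ (X : ℝ → ℝ), (∀ x ∉ K, X x = 0) → HasCompactSupport X := by
    intro X hXK
    apply HasCompactSupport.of_support_subset_isCompact hKc
    intro x hx
    by_contra h
    exact hx (hXK x h)
  -- IBP (i)
  have IBP1 : ∫ x, φ2 x = 0 := by
    have hP01K : ∀ x ∉ K, P01 x = 0 := by
      intro x hx
      simp [hP01def, hK0 x hx]
    exact integral_eq_zero_of_hasDerivAt P01 φ2 hP01' hφ2cont (hcompl P01 hP01K)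
      (tsuppIio P01 hP01K)
  -- IBP (ii)
  have IBP2 : ∫ x, φA x = 0 := by
    have hGK : ∀ x ∉ K, c x * N1 x = 0 := by
      intro x hx
      simp [hN1def, hK1 x hx]
    have hder : ∀ x, HasDerivAt (fun x => c x * N1 x) (φA x) x := by
      apply hasDerivAt_glue hKcl hsub _ _ _ hGK hφAK
      intro x hx
      have h := (hc x hx).mul (hN1' x)
      refine h.congr_deriv ?_
      simp only [hφAdef]
      ring
    exact integral_eq_zero_of_hasDerivAt _ φA hder hφAcont (hcompl _ hGK) (tsuppIio _ hGK)
  -- IBP (iii)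
  have IBP3 : ∫ x, φB x = 0 := by
    have hGK : ∀ x ∉ K, c x * N0 x = 0 := by
      intro x hx
      simp [hN0def, hK0 x hx]
    have hder : ∀ x, HasDerivAt (fun x => c x * N0 x) (φB x) x := by
      apply hasDerivAt_glue hKcl hsub _ _ _ hGK hφBK
      intro x hx
      have h := (hc x hx).mul (hN0' x)
      refine h.congr_deriv ?_
      simp only [hφBdef]
      ring
    exact integral_eq_zero_of_hasDerivAt _ φB hder hφBcont (hcompl _ hGK) (tsuppIio _ hGK)
  -- the nonnegative function W and the target integrand T
  set W : ℝ → ℝ := fun x => ‖f2 x - (c x : ℂ) * f1 x + (β : ℂ) * f x‖ ^ 2 with hWdef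
  set T : ℝ → ℝ := fun x =>
    N2 x - (2 * β + 1) * N1 x - (β / Real.sin x ^ 2 - β ^ 2) * N0 x with hTdef
  -- the key pointwise identity
  have hkey : ∀ x, W x = T x - φA x - β * φB x + β * φ2 x := by
    intro x
    have hR : (c x ^ 2 + 1 - 1 / Real.sin x ^ 2) * N1 x = 0 := by
      by_cases hx : x ∈ Ioo (0 : ℝ) Real.pi
      · have hs := hsin x hx
        have hz : c x ^ 2 + 1 - 1 / Real.sin x ^ 2 = 0 := by
          have h2 := Real.sin_sq_add_cos_sq x
          field_simp [hcdef]
          simp only [hcdef, div_pow]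
          field_simp
          linarith
        rw [hz, zero_mul]
      · have hxK : x ∉ K := fun h => hx (hsub h)
        simp [hN1def, hK1 x hxK]
    have expand : W x = T x - φA x - β * φB x + β * φ2 x
        + (c x ^ 2 + 1 - 1 / Real.sin x ^ 2) * N1 x := by
      simp only [hWdef, hTdef, hφAdef, hφBdef, hφ2def, hN0def, hN1def, hN2def,
        hP01def, hP02def, hP12def, nsq, Complex.add_re, Complex.add_im, Complex.sub_re,
        Complex.sub_im, Complex.mul_re, Complex.mul_im, Complex.ofReal_re, Complex.ofReal_im,
        Complex.conj_re, Complex.conj_im]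
      ring
    rw [expand, hR, add_zero]
  -- integrability
  have hN0K : ∀ x ∉ K, N0 x = 0 := fun x hx => by simp [hN0def, hK0 x hx]
  have hN1K : ∀ x ∉ K, N1 x = 0 := fun x hx => by simp [hN1def, hK1 x hx]
  have hN2K : ∀ x ∉ K, N2 x = 0 := fun x hx => by simp [hN2def, hK2 x hx]
  have hintN0 : Integrable N0 := myInt N0 hcN0 hN0K
  have hintN1 : Integrable N1 := myInt N1 hcN1 hN1K
  have hintN2 : Integrable N2 := myInt N2 hcN2 hN2K
  have hintφ2 : Integrable φ2 := myInt φ2 hφ2cont hφ2K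
  have hintφA : Integrable φA := myInt φA hφAcont hφAK
  have hintφB : Integrable φB := myInt φB hφBcont hφBK
  have hV : ∀ x ∉ K, (β / Real.sin x ^ 2 - β ^ 2) * N0 x = 0 := by
    intro x hx
    simp [hN0K x hx]
  have hVcont : Continuous (fun x => (β / Real.sin x ^ 2 - β ^ 2) * N0 x) := by
    apply continuous_glue hKcl hsub _ _ hV
    exact (((continuousOn_const.div ((Real.continuous_sin.pow 2).continuousOn)
      (fun x hx => pow_ne_zero 2 (hsin x hx))).sub continuousOn_const).mul hcN0.continuousOn)
  have hintV : Integrable (fun x => (β / Real.sin x ^ 2 - β ^ 2) * N0 x) :=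
    myInt _ hVcont hV
  have hTK : ∀ x ∉ K, T x = 0 := by
    intro x hx
    simp [hTdef, hN0K x hx, hN1K x hx, hN2K x hx]
  have hintT : Integrable T := by
    have : T = fun x => N2 x - (2 * β + 1) * N1 x
        - (β / Real.sin x ^ 2 - β ^ 2) * N0 x := rfl
    rw [this]
    exact (hintN2.sub (hintN1.const_mul _)).sub hintV
  -- the chain of integral identities
  have hint11 : Integrable (fun x => (2 * β + 1) * N1 x) := hintN1.const_mul _
  have hint12 : Integrable (fun x => N2 x - (2 * β + 1) * N1 x) := hintN2.sub hint11
  have hIT : ∫ x, T x = (∫ x, N2 x) - (2 * β + 1) * (∫ x, N1 x)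
      - ∫ x, (β / Real.sin x ^ 2 - β ^ 2) * N0 x := by
    simp only [hTdef]
    rw [integral_sub hint12 hintV, integral_sub hintN2 hint11, integral_const_mul]
  have hIW : ∫ x, W x = ∫ x, T x := by
    have : (fun x => W x) = fun x => (T x - φA x - β * φB x) + β * φ2 x := by
      funext x; rw [hkey x]
    have hintβB : Integrable (fun x => β * φB x) := hintφB.const_mul β
    have hintβ2 : Integrable (fun x => β * φ2 x) := hintφ2.const_mul β
    have h3 : Integrable (fun x => T x - φA x) := hintT.sub hintφA
    have h4 : Integrable (fun x => T x - φA x - β * φB x) := h3.sub hintβB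
    rw [this, integral_add h4 hintβ2, integral_sub h3 hintβB,
      integral_sub hintT hintφA, integral_const_mul, integral_const_mul,
      IBP1, IBP2, IBP3]
    ring
  have hWnonneg : 0 ≤ ∫ x, W x := integral_nonneg (fun x => by positivity)
  -- convert the set integrals in the goal
  have hset : ∀ (X : ℝ → ℝ), (∀ x ∉ K, X x = 0) →
      ∫ x in Ioo (0 : ℝ) Real.pi, X x = ∫ x, X x := by
    intro X hXK
    apply setIntegral_eq_integral_of_forall_compl_eq_zero
    intro x hx
    exact hXK x (fun h => hx (hsub h))
  have hgoal2 : ∫ x in Ioo (0 : ℝ) Real.pi, ‖iteratedDeriv 2 f x‖ ^ 2 = ∫ x, N2 x := by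
    rw [show (fun x => ‖iteratedDeriv 2 f x‖ ^ 2) = N2 by
      funext x
      rw [show iteratedDeriv 2 f = f2 by
        rw [iteratedDeriv_succ, iteratedDeriv_one]]]
    exact hset N2 hN2K
  have hgoal1 : ∫ x in Ioo (0 : ℝ) Real.pi, ‖deriv f x‖ ^ 2 = ∫ x, N1 x := hset N1 hN1K
  have hgoal0 : ∫ x in Ioo (0 : ℝ) Real.pi, (β / Real.sin x ^ 2 - β ^ 2) * ‖f x‖ ^ 2
      = ∫ x, (β / Real.sin x ^ 2 - β ^ 2) * N0 x := hset _ hV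
  rw [ge_iff_le, hgoal2, hgoal1, hgoal0]
  have := hWnonneg
  rw [hIW, hIT] at this
  linarith
end
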